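/- Fix r, s ∈ ℂ. For smooth f : ℝ² → ℂ define h f = −x ∂_x f − 2t ∂_t f + r f, e⁺ f = −∂_t f, e⁻ f = t x ∂_x f + t² ∂_t f − (s x² + r t) f, and Ω f = (1/2)h(h f) − h f + 2e⁺(e⁻ f). For a smooth F : ℝ² → ℂ let f(t,x) = (1+t²)^{r/2} exp( s t x²/(1+t²) ) F( arctan t , x(1+t²)^{−1/2} ). Then for all (t,x), writing θ = arctan t and y = x(1+t²)^{−1/2}: 2(Ω f)(t,x) − r(r+2) f(t,x) = (1+t²)^{r/2} exp( s t x²/(1+t²) ) · ( 4 s y² ∂_θF(θ,y) + 4 s² y⁴ F(θ,y) + y² ∂_y² F(θ,y) − (1+2r) y ∂_y F(θ,y) ). -/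

import Mathlib

open Complex

/-- Partial derivative in the first variable. -/
noncomputable def pderivT (f : ℝ → ℝ → ℂ) (t x : ℝ) : ℂ := deriv (fun t' => f t' x) t

/-- Partial derivative in the second variable. -/
noncomputable def pderivX (f : ℝ → ℝ → ℂ) (t x : ℝ) : ℂ := deriv (fun x' => f t x') x

/-- Second partial derivative in the second variable. -/
noncomputable def pderivXX (f : ℝ → ℝ → ℂ) (t x : ℝ) : ℂ :=
  deriv (deriv (fun x' => f t x')) x

/-- `h f = -x ∂_x f - 2t ∂_t f + r f`. -/
noncomputable def Hop (r : ℂ) (f : ℝ → ℝ → ℂ) (t x : ℝ) : ℂ :=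
  -(x : ℂ) * pderivX f t x - 2 * (t : ℂ) * pderivT f t x + r * f t x

/-- `e⁺ f = -∂_t f`. -/
noncomputable def Eplus (f : ℝ → ℝ → ℂ) (t x : ℝ) : ℂ := -pderivT f t x

/-- `e⁻ f = t x ∂_x f + t² ∂_t f - (s x² + r t) f`. -/
noncomputable def Eminus (r s : ℂ) (f : ℝ → ℝ → ℂ) (t x : ℝ) : ℂ :=
  (t : ℂ) * (x : ℂ) * pderivX f t x + (t : ℂ) ^ 2 * pderivT f t x
    - (s * (x : ℂ) ^ 2 + r * (t : ℂ)) * f t x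

/-- `Ω f = (1/2) h(h f) - h f + 2 e⁺(e⁻ f)`. -/
noncomputable def OmegaNC (r s : ℂ) (f : ℝ → ℝ → ℂ) (t x : ℝ) : ℂ :=
  (1/2 : ℂ) * Hop r (fun t' x' => Hop r f t' x') t x - Hop r f t x
    + 2 * Eplus (fun t' x' => Eminus r s f t' x') t x

/-- The prefactor `(1+t²)^{r/2} exp(s t x²/(1+t²))`. -/
noncomputable def prefac (r s : ℂ) (t x : ℝ) : ℂ :=
  Complex.exp ((r / 2) * (Real.log (1 + t ^ 2) : ℂ))
    * Complex.exp (s * (t : ℂ) * (x : ℂ) ^ 2 / (1 + (t : ℂ) ^ 2))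

/-- `f(t,x) = (1+t²)^{r/2} exp(s t x²/(1+t²)) F(arctan t, x(1+t²)^{-1/2})`. -/
noncomputable def fofF (r s : ℂ) (F : ℝ → ℝ → ℂ) (t x : ℝ) : ℂ :=
  prefac r s t x * F (Real.arctan t) (x / Real.sqrt (1 + t ^ 2))

/-! ### Auxiliary elementary derivative lemmas -/

lemma hasOfReal (x : ℝ) : HasDerivAt (fun x' : ℝ => (x' : ℂ)) 1 x := by
  exact Complex.ofRealCLM.hasDerivAt (x := x)

lemma sq_hasDeriv (t : ℝ) : HasDerivAt (fun t' : ℝ => (t':ℂ)^2) (2*(t:ℂ)) t := by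
  have h := (hasOfReal t).mul (hasOfReal t)
  simp only [pow_two, two_mul, mul_one, one_mul] at h ⊢
  exact h

lemma sq_hasDerivR (t : ℝ) : HasDerivAt (fun t' : ℝ => 1 + t'^2) (2*t) t := by
  simpa [pow_two, two_mul] using ((hasDerivAt_id t).mul (hasDerivAt_id t)).const_add 1

/-! ### Partial derivatives of a jointly smooth function -/

section gen
variable {f : ℝ → ℝ → ℂ}

lemma hasT (hf : ContDiff ℝ (⊤:ℕ∞) (fun p : ℝ × ℝ => f p.1 p.2)) (t x : ℝ) :
    HasDerivAt (fun t' => f t' x) (fderiv ℝ (fun p : ℝ × ℝ => f p.1 p.2) (t, x) (1, 0)) t :=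
  ((hf.differentiable (by simp) (t, x)).hasFDerivAt).comp_hasDerivAt (l := fun p : ℝ × ℝ => f p.1 p.2) t
    ((hasDerivAt_id t).prodMk (hasDerivAt_const t x))

lemma hasX (hf : ContDiff ℝ (⊤:ℕ∞) (fun p : ℝ × ℝ => f p.1 p.2)) (t x : ℝ) :
    HasDerivAt (fun x' => f t x') (fderiv ℝ (fun p : ℝ × ℝ => f p.1 p.2) (t, x) (0, 1)) x :=
  ((hf.differentiable (by simp) (t, x)).hasFDerivAt).comp_hasDerivAt (l := fun p : ℝ × ℝ => f p.1 p.2) x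
    ((hasDerivAt_const x t).prodMk (hasDerivAt_id x))

lemma pdT_eq (hf : ContDiff ℝ (⊤:ℕ∞) (fun p : ℝ × ℝ => f p.1 p.2)) (t x : ℝ) :
    pderivT f t x = fderiv ℝ (fun p : ℝ × ℝ => f p.1 p.2) (t, x) (1, 0) :=
  (hasT hf t x).deriv

lemma pdX_eq (hf : ContDiff ℝ (⊤:ℕ∞) (fun p : ℝ × ℝ => f p.1 p.2)) (t x : ℝ) :
    pderivX f t x = fderiv ℝ (fun p : ℝ × ℝ => f p.1 p.2) (t, x) (0, 1) :=
  (hasX hf t x).deriv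

lemma hasT' (hf : ContDiff ℝ (⊤:ℕ∞) (fun p : ℝ × ℝ => f p.1 p.2)) (t x : ℝ) :
    HasDerivAt (fun t' => f t' x) (pderivT f t x) t := by
  rw [pdT_eq hf]; exact hasT hf t x

lemma hasX' (hf : ContDiff ℝ (⊤:ℕ∞) (fun p : ℝ × ℝ => f p.1 p.2)) (t x : ℝ) :
    HasDerivAt (fun x' => f t x') (pderivX f t x) x := by
  rw [pdX_eq hf]; exact hasX hf t x

lemma pdTX_apply (hf : ContDiff ℝ (⊤:ℕ∞) (fun p : ℝ × ℝ => f p.1 p.2)) (t x a b : ℝ) :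
    fderiv ℝ (fun p : ℝ × ℝ => f p.1 p.2) (t, x) (a, b)
      = (a:ℂ) * pderivT f t x + (b:ℂ) * pderivX f t x := by
  rw [pdT_eq hf, pdX_eq hf]
  have h : ((a, b) : ℝ × ℝ) = a • ((1:ℝ), (0:ℝ)) + b • ((0:ℝ), (1:ℝ)) := by simp
  rw [h, map_add, map_smul, map_smul, Complex.real_smul, Complex.real_smul]

lemma slice_smooth (hf : ContDiff ℝ (⊤:ℕ∞) (fun p : ℝ × ℝ => f p.1 p.2)) (t : ℝ) :
    ContDiff ℝ (⊤:ℕ∞) (fun x' => f t x') :=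
  hf.comp ((contDiff_const.prodMk contDiff_id))

lemma hasXX (hf : ContDiff ℝ (⊤:ℕ∞) (fun p : ℝ × ℝ => f p.1 p.2)) (t x : ℝ) :
    HasDerivAt (fun x' => pderivX f t x') (pderivXX f t x) x := by
  have h1 : ContDiff ℝ (⊤:ℕ∞) (deriv (fun x' => f t x')) :=
    (contDiff_infty_iff_deriv.mp (slice_smooth hf t)).2
  exact (h1.differentiable (by simp) x).hasDerivAt

lemma sndf (hf : ContDiff ℝ (⊤:ℕ∞) (fun p : ℝ × ℝ => f p.1 p.2)) (t x : ℝ) :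
    HasFDerivAt (fderiv ℝ (fun p : ℝ × ℝ => f p.1 p.2))
      (fderiv ℝ (fderiv ℝ (fun p : ℝ × ℝ => f p.1 p.2)) (t,x)) (t,x) :=
  (((hf.fderiv_right (m := (⊤:ℕ∞)) (by simp)).differentiable
      (by simp)) (t,x)).hasFDerivAt

lemma clairaut (hf : ContDiff ℝ (⊤:ℕ∞) (fun p : ℝ × ℝ => f p.1 p.2)) (t x : ℝ) (v w : ℝ × ℝ) :
    fderiv ℝ (fderiv ℝ (fun p : ℝ × ℝ => f p.1 p.2)) (t,x) v w
      = fderiv ℝ (fderiv ℝ (fun p : ℝ × ℝ => f p.1 p.2)) (t,x) w v := by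
  apply second_derivative_symmetric
    (fun y => (hf.differentiable (by simp) y).hasFDerivAt) (sndf hf t x)

lemma hasXT (hf : ContDiff ℝ (⊤:ℕ∞) (fun p : ℝ × ℝ => f p.1 p.2)) (t x : ℝ) :
    HasDerivAt (fun x' => pderivT f t x')
      (fderiv ℝ (fderiv ℝ (fun p : ℝ × ℝ => f p.1 p.2)) (t,x) (0,1) (1,0)) x := by
  have key : HasDerivAt (fun x' => fderiv ℝ (fun p : ℝ × ℝ => f p.1 p.2) (t,x') ((1:ℝ),(0:ℝ)))
      (fderiv ℝ (fderiv ℝ (fun p : ℝ × ℝ => f p.1 p.2)) (t,x) (0,1) (1,0)) x := by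
    have h1 : HasFDerivAt
        (fun p => (ContinuousLinearMap.apply ℝ ℂ ((1:ℝ),(0:ℝ)))
            (fderiv ℝ (fun p : ℝ × ℝ => f p.1 p.2) p))
        ((ContinuousLinearMap.apply ℝ ℂ ((1:ℝ),(0:ℝ))).comp
          (fderiv ℝ (fderiv ℝ (fun p : ℝ × ℝ => f p.1 p.2)) (t,x))) (t,x) :=
      (ContinuousLinearMap.apply ℝ ℂ ((1:ℝ),(0:ℝ))).hasFDerivAt.comp (t,x) (sndf hf t x)
    exact h1.comp_hasDerivAt x ((hasDerivAt_const x t).prodMk (hasDerivAt_id x))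
  have heq : (fun x' => pderivT f t x')
      = fun x' => fderiv ℝ (fun p : ℝ × ℝ => f p.1 p.2) (t,x') ((1:ℝ),(0:ℝ)) := by
    funext x'; exact pdT_eq hf t x'
  rw [heq]; exact key

lemma hasTX (hf : ContDiff ℝ (⊤:ℕ∞) (fun p : ℝ × ℝ => f p.1 p.2)) (t x : ℝ) :
    HasDerivAt (fun t' => pderivX f t' x)
      (fderiv ℝ (fderiv ℝ (fun p : ℝ × ℝ => f p.1 p.2)) (t,x) (1,0) (0,1)) t := by
  have key : HasDerivAt (fun t' => fderiv ℝ (fun p : ℝ × ℝ => f p.1 p.2) (t',x) ((0:ℝ),(1:ℝ)))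
      (fderiv ℝ (fderiv ℝ (fun p : ℝ × ℝ => f p.1 p.2)) (t,x) (1,0) (0,1)) t := by
    have h1 : HasFDerivAt
        (fun p => (ContinuousLinearMap.apply ℝ ℂ ((0:ℝ),(1:ℝ)))
            (fderiv ℝ (fun p : ℝ × ℝ => f p.1 p.2) p))
        ((ContinuousLinearMap.apply ℝ ℂ ((0:ℝ),(1:ℝ))).comp
          (fderiv ℝ (fderiv ℝ (fun p : ℝ × ℝ => f p.1 p.2)) (t,x))) (t,x) :=
      (ContinuousLinearMap.apply ℝ ℂ ((0:ℝ),(1:ℝ))).hasFDerivAt.comp (t,x) (sndf hf t x)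
    exact h1.comp_hasDerivAt t ((hasDerivAt_id t).prodMk (hasDerivAt_const t x))
  have heq : (fun t' => pderivX f t' x)
      = fun t' => fderiv ℝ (fun p : ℝ × ℝ => f p.1 p.2) (t',x) ((0:ℝ),(1:ℝ)) := by
    funext t'; exact pdX_eq hf t' x
  rw [heq]; exact key

lemma hasTT (hf : ContDiff ℝ (⊤:ℕ∞) (fun p : ℝ × ℝ => f p.1 p.2)) (t x : ℝ) :
    HasDerivAt (fun t' => pderivT f t' x)
      (fderiv ℝ (fderiv ℝ (fun p : ℝ × ℝ => f p.1 p.2)) (t,x) (1,0) (1,0)) t := by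
  have key : HasDerivAt (fun t' => fderiv ℝ (fun p : ℝ × ℝ => f p.1 p.2) (t',x) ((1:ℝ),(0:ℝ)))
      (fderiv ℝ (fderiv ℝ (fun p : ℝ × ℝ => f p.1 p.2)) (t,x) (1,0) (1,0)) t := by
    have h1 : HasFDerivAt
        (fun p => (ContinuousLinearMap.apply ℝ ℂ ((1:ℝ),(0:ℝ)))
            (fderiv ℝ (fun p : ℝ × ℝ => f p.1 p.2) p))
        ((ContinuousLinearMap.apply ℝ ℂ ((1:ℝ),(0:ℝ))).comp
          (fderiv ℝ (fderiv ℝ (fun p : ℝ × ℝ => f p.1 p.2)) (t,x))) (t,x) :=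
      (ContinuousLinearMap.apply ℝ ℂ ((1:ℝ),(0:ℝ))).hasFDerivAt.comp (t,x) (sndf hf t x)
    exact h1.comp_hasDerivAt t ((hasDerivAt_id t).prodMk (hasDerivAt_const t x))
  have heq : (fun t' => pderivT f t' x)
      = fun t' => fderiv ℝ (fun p : ℝ × ℝ => f p.1 p.2) (t',x) ((1:ℝ),(0:ℝ)) := by
    funext t'; exact pdT_eq hf t' x
  rw [heq]; exact key

/-- The key operator identity: `2Ω f - r(r+2) f = x² f_xx - (1+2r) x f_x + 4 s x² f_t`
for any jointly smooth `f`. -/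
lemma op_lemma (r s : ℂ) (hf : ContDiff ℝ (⊤:ℕ∞) (fun p : ℝ × ℝ => f p.1 p.2)) (t x : ℝ) :
    2 * OmegaNC r s f t x - r * (r + 2) * f t x
      = (x:ℂ)^2 * pderivXX f t x - (1 + 2*r) * (x:ℂ) * pderivX f t x
        + 4 * s * (x:ℂ)^2 * pderivT f t x := by
  have e1 : pderivX (fun t' x' => Hop r f t' x') t x
      = ((-1) * pderivX f t x + -(x:ℂ) * pderivXX f t x)
        - 2 * (t:ℂ) * (fderiv ℝ (fderiv ℝ (fun p : ℝ × ℝ => f p.1 p.2)) (t,x) (0,1) (1,0))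
        + r * pderivX f t x := by
    show deriv (fun x' : ℝ => -(x':ℂ) * pderivX f t x' - 2 * (t:ℂ) * pderivT f t x'
        + r * f t x') x = _
    exact ((((hasOfReal x).neg.mul (hasXX hf t x)).sub
      (HasDerivAt.const_mul (2 * (t:ℂ)) (hasXT hf t x))).add
      (HasDerivAt.const_mul r (hasX' hf t x))).deriv
  have e2 : pderivT (fun t' x' => Hop r f t' x') t x
      = -(x:ℂ) * (fderiv ℝ (fderiv ℝ (fun p : ℝ × ℝ => f p.1 p.2)) (t,x) (1,0) (0,1))
        - ((2 * 1) * pderivT f t x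
            + 2 * (t:ℂ) * (fderiv ℝ (fderiv ℝ (fun p : ℝ × ℝ => f p.1 p.2)) (t,x) (1,0) (1,0)))
        + r * pderivT f t x := by
    show deriv (fun t' : ℝ => -(x:ℂ) * pderivX f t' x - 2 * (t':ℂ) * pderivT f t' x
        + r * f t' x) t = _
    exact (((HasDerivAt.const_mul (-(x:ℂ)) (hasTX hf t x)).sub
      ((HasDerivAt.const_mul 2 (hasOfReal t)).mul (hasTT hf t x))).add
      (HasDerivAt.const_mul r (hasT' hf t x))).deriv
  have e3 : pderivT (fun t' x' => Eminus r s f t' x') t x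
      = ((1 * (x:ℂ)) * pderivX f t x
          + ((t:ℂ) * (x:ℂ)) * (fderiv ℝ (fderiv ℝ (fun p : ℝ × ℝ => f p.1 p.2)) (t,x) (1,0) (0,1)))
        + ((2 * (t:ℂ)) * pderivT f t x
          + (t:ℂ)^2 * (fderiv ℝ (fderiv ℝ (fun p : ℝ × ℝ => f p.1 p.2)) (t,x) (1,0) (1,0)))
        - ((r * 1) * f t x + (s * (x:ℂ)^2 + r * (t:ℂ)) * pderivT f t x) := by
    show deriv (fun t' : ℝ => (t':ℂ) * (x:ℂ) * pderivX f t' x + (t':ℂ)^2 * pderivT f t' x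
        - (s * (x:ℂ)^2 + r * (t':ℂ)) * f t' x) t = _
    exact (((((hasOfReal t).mul_const (x:ℂ)).mul (hasTX hf t x)).add
      ((sq_hasDeriv t).mul (hasTT hf t x))).sub
      ((HasDerivAt.const_add (s * (x:ℂ)^2) (HasDerivAt.const_mul r (hasOfReal t))).mul
        (hasT' hf t x))).deriv
  have hM : fderiv ℝ (fderiv ℝ (fun p : ℝ × ℝ => f p.1 p.2)) (t,x) (0,1) (1,0)
      = fderiv ℝ (fderiv ℝ (fun p : ℝ × ℝ => f p.1 p.2)) (t,x) (1,0) (0,1) :=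
    clairaut hf t x _ _
  have hΩ : OmegaNC r s f t x
      = (1/2 : ℂ) * (-(x:ℂ) * (pderivX (fun t' x' => Hop r f t' x') t x)
          - 2 * (t:ℂ) * (pderivT (fun t' x' => Hop r f t' x') t x)
          + r * (-(x:ℂ) * pderivX f t x - 2 * (t:ℂ) * pderivT f t x + r * f t x))
        - (-(x:ℂ) * pderivX f t x - 2 * (t:ℂ) * pderivT f t x + r * f t x)
        + 2 * (-(pderivT (fun t' x' => Eminus r s f t' x') t x)) := rfl
  rw [hΩ, e1, e2, e3, hM]
  ring

end gen

/-! ### Derivatives of `fofF` -/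

lemma hasPrefX (r s : ℂ) (t x : ℝ) :
    HasDerivAt (fun x' => prefac r s t x')
      (prefac r s t x * (2 * s * (t:ℂ) * (x:ℂ) / (1 + (t:ℂ)^2))) x := by
  have hinner : HasDerivAt (fun x' : ℝ => s * (t:ℂ) * (x':ℂ)^2 / (1 + (t:ℂ)^2))
      ((s * (t:ℂ) * (2*(x:ℂ))) / (1 + (t:ℂ)^2)) x :=
    (HasDerivAt.const_mul (s * (t:ℂ)) (sq_hasDeriv x)).div_const _
  have h := (hinner.cexp).const_mul (Complex.exp ((r / 2) * (Real.log (1 + t ^ 2) : ℂ)))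
  refine h.congr_deriv (Eq.symm ?_)
  rw [prefac]; ring

lemma hasGX {F : ℝ → ℝ → ℂ} (hF : ContDiff ℝ (⊤:ℕ∞) (fun p : ℝ × ℝ => F p.1 p.2)) (t x : ℝ) :
    HasDerivAt (fun x' => F (Real.arctan t) (x' / Real.sqrt (1 + t^2)))
      ((1 / ((Real.sqrt (1 + t^2) : ℝ) : ℂ))
        * pderivX F (Real.arctan t) (x / Real.sqrt (1 + t^2))) x := by
  have hin : HasDerivAt (fun x' : ℝ => x' / Real.sqrt (1 + t^2)) (1 / Real.sqrt (1 + t^2)) x := by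
    simpa using (hasDerivAt_id x).div_const (Real.sqrt (1 + t^2))
  have h := (hasX' hF (Real.arctan t) (x / Real.sqrt (1 + t^2))).scomp x hin
  simp [Complex.real_smul, mul_comm] at h ⊢
  exact h

lemma PX (r s : ℂ) {F : ℝ → ℝ → ℂ} (hF : ContDiff ℝ (⊤:ℕ∞) (fun p : ℝ × ℝ => F p.1 p.2))
    (t x : ℝ) :
    pderivX (fofF r s F) t x
      = prefac r s t x *
        (2 * s * (t:ℂ) * (x:ℂ) / (1 + (t:ℂ)^2) * F (Real.arctan t) (x / Real.sqrt (1 + t^2))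
          + (1 / ((Real.sqrt (1 + t^2) : ℝ) : ℂ))
              * pderivX F (Real.arctan t) (x / Real.sqrt (1 + t^2))) := by
  have h := (hasPrefX r s t x).mul (hasGX hF t x)
  have h2 : pderivX (fofF r s F) t x
      = prefac r s t x * (2 * s * (t:ℂ) * (x:ℂ) / (1 + (t:ℂ)^2))
          * F (Real.arctan t) (x / Real.sqrt (1 + t^2))
        + prefac r s t x * ((1 / ((Real.sqrt (1 + t^2) : ℝ) : ℂ))
            * pderivX F (Real.arctan t) (x / Real.sqrt (1 + t^2))) := by
    show deriv (fun x' => prefac r s t x' * F (Real.arctan t) (x' / Real.sqrt (1 + t^2))) x = _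
    exact h.deriv
  rw [h2]; ring

lemma hasFyX {F : ℝ → ℝ → ℂ} (hF : ContDiff ℝ (⊤:ℕ∞) (fun p : ℝ × ℝ => F p.1 p.2)) (t x : ℝ) :
    HasDerivAt (fun x' => pderivX F (Real.arctan t) (x' / Real.sqrt (1 + t^2)))
      ((1 / ((Real.sqrt (1 + t^2) : ℝ) : ℂ))
        * pderivXX F (Real.arctan t) (x / Real.sqrt (1 + t^2))) x := by
  have hin : HasDerivAt (fun x' : ℝ => x' / Real.sqrt (1 + t^2)) (1 / Real.sqrt (1 + t^2)) x := by
    simpa using (hasDerivAt_id x).div_const (Real.sqrt (1 + t^2))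
  have h := (hasXX hF (Real.arctan t) (x / Real.sqrt (1 + t^2))).scomp x hin
  simp [Complex.real_smul, mul_comm] at h ⊢
  exact h

lemma PXX (r s : ℂ) {F : ℝ → ℝ → ℂ} (hF : ContDiff ℝ (⊤:ℕ∞) (fun p : ℝ × ℝ => F p.1 p.2))
    (t x : ℝ) :
    pderivXX (fofF r s F) t x
      = prefac r s t x *
        ((2 * s * (t:ℂ) * (x:ℂ) / (1 + (t:ℂ)^2))^2 * F (Real.arctan t) (x / Real.sqrt (1 + t^2))
          + 2 * s * (t:ℂ) / (1 + (t:ℂ)^2) * F (Real.arctan t) (x / Real.sqrt (1 + t^2))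
          + 2 * (2 * s * (t:ℂ) * (x:ℂ) / (1 + (t:ℂ)^2)) * (1 / ((Real.sqrt (1 + t^2) : ℝ) : ℂ))
              * pderivX F (Real.arctan t) (x / Real.sqrt (1 + t^2))
          + (1 / ((Real.sqrt (1 + t^2) : ℝ) : ℂ))^2
              * pderivXX F (Real.arctan t) (x / Real.sqrt (1 + t^2))) := by
  have hfx : (deriv (fun x' => fofF r s F t x'))
      = fun x' => prefac r s t x' *
        (2 * s * (t:ℂ) * (x':ℂ) / (1 + (t:ℂ)^2) * F (Real.arctan t) (x' / Real.sqrt (1 + t^2))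
          + (1 / ((Real.sqrt (1 + t^2) : ℝ) : ℂ))
              * pderivX F (Real.arctan t) (x' / Real.sqrt (1 + t^2))) := by
    funext x'; exact PX r s hF t x'
  have hbr : HasDerivAt (fun x' : ℝ =>
      2 * s * (t:ℂ) * (x':ℂ) / (1 + (t:ℂ)^2) * F (Real.arctan t) (x' / Real.sqrt (1 + t^2))
        + (1 / ((Real.sqrt (1 + t^2) : ℝ) : ℂ))
            * pderivX F (Real.arctan t) (x' / Real.sqrt (1 + t^2)))
      ((2 * s * (t:ℂ) * 1 / (1 + (t:ℂ)^2)) * F (Real.arctan t) (x / Real.sqrt (1 + t^2))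
        + (2 * s * (t:ℂ) * (x:ℂ) / (1 + (t:ℂ)^2))
            * ((1 / ((Real.sqrt (1 + t^2) : ℝ) : ℂ))
                * pderivX F (Real.arctan t) (x / Real.sqrt (1 + t^2)))
        + (1 / ((Real.sqrt (1 + t^2) : ℝ) : ℂ))
            * ((1 / ((Real.sqrt (1 + t^2) : ℝ) : ℂ))
                * pderivXX F (Real.arctan t) (x / Real.sqrt (1 + t^2)))) x :=
    ((((hasOfReal x).const_mul (2 * s * (t:ℂ))).div_const (1 + (t:ℂ)^2)).mul
      (hasGX hF t x)).add (HasDerivAt.const_mul (1 / ((Real.sqrt (1 + t^2) : ℝ) : ℂ))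
        (hasFyX hF t x))
  have h2 : pderivXX (fofF r s F) t x
      = prefac r s t x * (2 * s * (t:ℂ) * (x:ℂ) / (1 + (t:ℂ)^2))
          * (2 * s * (t:ℂ) * (x:ℂ) / (1 + (t:ℂ)^2)
              * F (Real.arctan t) (x / Real.sqrt (1 + t^2))
            + (1 / ((Real.sqrt (1 + t^2) : ℝ) : ℂ))
                * pderivX F (Real.arctan t) (x / Real.sqrt (1 + t^2)))
        + prefac r s t x *
          ((2 * s * (t:ℂ) * 1 / (1 + (t:ℂ)^2)) * F (Real.arctan t) (x / Real.sqrt (1 + t^2))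
            + (2 * s * (t:ℂ) * (x:ℂ) / (1 + (t:ℂ)^2))
                * ((1 / ((Real.sqrt (1 + t^2) : ℝ) : ℂ))
                    * pderivX F (Real.arctan t) (x / Real.sqrt (1 + t^2)))
            + (1 / ((Real.sqrt (1 + t^2) : ℝ) : ℂ))
                * ((1 / ((Real.sqrt (1 + t^2) : ℝ) : ℂ))
                    * pderivXX F (Real.arctan t) (x / Real.sqrt (1 + t^2)))) := by
    simp only [pderivXX]
    rw [hfx]
    exact ((hasPrefX r s t x).mul hbr).deriv
  rw [h2]; ring

lemma hasSqrtT (t : ℝ) :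
    HasDerivAt (fun t' : ℝ => Real.sqrt (1 + t'^2)) (t / Real.sqrt (1 + t^2)) t := by
  have hu : (0:ℝ) < 1 + t^2 := by positivity
  have h := (Real.hasDerivAt_sqrt (ne_of_gt hu)).comp t (sq_hasDerivR t)
  refine h.congr_deriv (Eq.symm ?_)
  have hc : Real.sqrt (1 + t^2) ≠ 0 := ne_of_gt (Real.sqrt_pos.mpr hu)
  field_simp

lemma hasYT (t x : ℝ) :
    HasDerivAt (fun t' : ℝ => x / Real.sqrt (1 + t'^2))
      (-(x*t) / ((1 + t^2) * Real.sqrt (1 + t^2))) t := by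
  have hu : (0:ℝ) < 1 + t^2 := by positivity
  have hc : (0:ℝ) < Real.sqrt (1 + t^2) := Real.sqrt_pos.mpr hu
  have h := (hasDerivAt_const t x).div (hasSqrtT t) (ne_of_gt hc)
  refine h.congr_deriv (Eq.symm ?_)
  rw [Real.sq_sqrt (le_of_lt hu)]
  field_simp
  ring

lemma hasGT {F : ℝ → ℝ → ℂ} (hF : ContDiff ℝ (⊤:ℕ∞) (fun p : ℝ × ℝ => F p.1 p.2)) (t x : ℝ) :
    HasDerivAt (fun t' => F (Real.arctan t') (x / Real.sqrt (1 + t'^2)))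
      ((((1 / (1 + t^2) : ℝ)):ℂ) * pderivT F (Real.arctan t) (x / Real.sqrt (1 + t^2))
        + ((-(x*t) / ((1 + t^2) * Real.sqrt (1 + t^2)) : ℝ):ℂ)
            * pderivX F (Real.arctan t) (x / Real.sqrt (1 + t^2))) t := by
  have curve : HasDerivAt (fun t' : ℝ => (Real.arctan t', x / Real.sqrt (1 + t'^2)))
      ((1 / (1 + t^2), -(x*t) / ((1 + t^2) * Real.sqrt (1 + t^2))) : ℝ × ℝ) t :=
    (Real.hasDerivAt_arctan t).prodMk (hasYT t x)
  have h := ((hF.differentiable (by simp)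
      (Real.arctan t, x / Real.sqrt (1 + t^2))).hasFDerivAt).comp_hasDerivAt t curve
  rwa [pdTX_apply hF] at h

lemma hasPrefT (r s : ℂ) (t x : ℝ) :
    HasDerivAt (fun t' => prefac r s t' x)
      (Complex.exp ((r / 2) * (Real.log (1 + t ^ 2) : ℂ)) * ((r/2) * ((2*t/(1+t^2) : ℝ):ℂ))
          * Complex.exp (s * (t : ℂ) * (x : ℂ) ^ 2 / (1 + (t : ℂ) ^ 2))
        + Complex.exp ((r / 2) * (Real.log (1 + t ^ 2) : ℂ))
          * (Complex.exp (s * (t : ℂ) * (x : ℂ) ^ 2 / (1 + (t : ℂ) ^ 2))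
            * ((s * 1 * (x:ℂ)^2 * (1 + (t:ℂ)^2) - s * (t:ℂ) * (x:ℂ)^2 * (2*(t:ℂ)))
                / (1 + (t:ℂ)^2)^2))) t := by
  have hu : (0:ℝ) < 1 + t^2 := by positivity
  have hlogR : HasDerivAt (fun t' : ℝ => Real.log (1 + t'^2)) (2*t/(1+t^2)) t := by
    have h := (Real.hasDerivAt_log (ne_of_gt hu)).comp t (sq_hasDerivR t)
    refine h.congr_deriv (Eq.symm ?_)
    ring
  have hE1 : HasDerivAt (fun t' : ℝ => Complex.exp ((r / 2) * (Real.log (1 + t' ^ 2) : ℂ)))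
      (Complex.exp ((r / 2) * (Real.log (1 + t ^ 2) : ℂ)) * ((r/2) * ((2*t/(1+t^2) : ℝ):ℂ))) t :=
    ((hlogR.ofReal_comp).const_mul (r/2)).cexp
  have hdne : (1 + (t:ℂ)^2) ≠ 0 := by
    have h : (1 + (t:ℂ)^2) = ((1 + t^2 : ℝ) : ℂ) := by push_cast; ring
    rw [h]
    exact_mod_cast ne_of_gt hu
  have hq : HasDerivAt (fun t' : ℝ => s * (t':ℂ) * (x:ℂ)^2 / (1 + (t':ℂ)^2))
      ((s * 1 * (x:ℂ)^2 * (1 + (t:ℂ)^2) - s * (t:ℂ) * (x:ℂ)^2 * (2*(t:ℂ)))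
        / (1 + (t:ℂ)^2)^2) t :=
    (((hasOfReal t).const_mul s).mul_const ((x:ℂ)^2)).div ((sq_hasDeriv t).const_add 1) hdne
  exact hE1.mul hq.cexp

lemma PT (r s : ℂ) {F : ℝ → ℝ → ℂ} (hF : ContDiff ℝ (⊤:ℕ∞) (fun p : ℝ × ℝ => F p.1 p.2))
    (t x : ℝ) :
    pderivT (fofF r s F) t x
      = prefac r s t x *
        ((r * (t:ℂ) / (1 + (t:ℂ)^2)
            + s * (x:ℂ)^2 * (1 - (t:ℂ)^2) / (1 + (t:ℂ)^2)^2)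
              * F (Real.arctan t) (x / Real.sqrt (1 + t^2))
          + (1 / (1 + (t:ℂ)^2)) * pderivT F (Real.arctan t) (x / Real.sqrt (1 + t^2))
          - ((x:ℂ) * (t:ℂ) / ((1 + (t:ℂ)^2) * ((Real.sqrt (1 + t^2) : ℝ):ℂ)))
              * pderivX F (Real.arctan t) (x / Real.sqrt (1 + t^2))) := by
  have h := (hasPrefT r s t x).mul (hasGT hF t x)
  have h2 : deriv (fun t' => prefac r s t' x * F (Real.arctan t') (x / Real.sqrt (1 + t'^2))) t = _ :=
    h.deriv
  have h3 : pderivT (fofF r s F) t x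
      = deriv (fun t' => prefac r s t' x * F (Real.arctan t') (x / Real.sqrt (1 + t'^2))) t :=
    rfl
  rw [h3, h2, prefac]
  have hu : (0:ℝ) < 1 + t^2 := by positivity
  have hdne : (1 + (t:ℂ)^2) ≠ 0 := by
    have h : (1 + (t:ℂ)^2) = ((1 + t^2 : ℝ) : ℂ) := by push_cast; ring
    rw [h]; exact_mod_cast ne_of_gt hu
  have hsne : ((Real.sqrt (1 + t^2) : ℝ):ℂ) ≠ 0 :=
    Complex.ofReal_ne_zero.mpr (ne_of_gt (Real.sqrt_pos.mpr hu))
  push_cast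
  field_simp [hdne, hsne]
  ring

/-! ### Smoothness of `fofF` -/

lemma smooth_fofF (r s : ℂ) {F : ℝ → ℝ → ℂ}
    (hF : ContDiff ℝ (⊤:ℕ∞) (fun p : ℝ × ℝ => F p.1 p.2)) :
    ContDiff ℝ (⊤:ℕ∞) (fun p : ℝ × ℝ => fofF r s F p.1 p.2) := by
  have hu : ContDiff ℝ (⊤:ℕ∞) (fun p : ℝ × ℝ => 1 + p.1^2) :=
    contDiff_const.add (contDiff_fst.pow 2)
  have hune : ∀ p : ℝ × ℝ, (1 + p.1^2) ≠ 0 := fun p => by positivity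
  have hsq : ContDiff ℝ (⊤:ℕ∞) (fun p : ℝ × ℝ => Real.sqrt (1 + p.1^2)) := hu.sqrt hune
  have hsqne : ∀ p : ℝ × ℝ, Real.sqrt (1 + p.1^2) ≠ 0 :=
    fun p => ne_of_gt (Real.sqrt_pos.mpr (by positivity))
  have hG : ContDiff ℝ (⊤:ℕ∞)
      (fun p : ℝ × ℝ => F (Real.arctan p.1) (p.2 / Real.sqrt (1 + p.1^2))) :=
    hF.comp ((Real.contDiff_arctan.comp contDiff_fst).prodMk (contDiff_snd.div hsq hsqne))
  have hcast : ContDiff ℝ (⊤:ℕ∞) (fun y : ℝ => (y:ℂ)) := Complex.ofRealCLM.contDiff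
  have hE1 : ContDiff ℝ (⊤:ℕ∞)
      (fun p : ℝ × ℝ => Complex.exp ((r/2) * ((Real.log (1+p.1^2) : ℝ):ℂ))) :=
    (contDiff_const.mul (hcast.comp (hu.log hune))).cexp
  have hdenne : ∀ p : ℝ × ℝ, (1 + ((p.1:ℝ):ℂ)^2) ≠ 0 := fun p => by
    have h : (1 + ((p.1:ℝ):ℂ)^2) = ((1 + p.1^2 : ℝ):ℂ) := by push_cast; ring
    rw [h]; exact_mod_cast hune p
  have hE2 : ContDiff ℝ (⊤:ℕ∞)
      (fun p : ℝ × ℝ => Complex.exp (s * (p.1:ℂ) * (p.2:ℂ)^2 / (1 + (p.1:ℂ)^2))) := by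
    have hnum : ContDiff ℝ (⊤:ℕ∞) (fun p : ℝ × ℝ => s * (p.1:ℂ) * (p.2:ℂ)^2) :=
      (contDiff_const.mul (hcast.comp contDiff_fst)).mul ((hcast.comp contDiff_snd).pow 2)
    have hden : ContDiff ℝ (⊤:ℕ∞) (fun p : ℝ × ℝ => (1 + (p.1:ℂ)^2)⁻¹) :=
      (contDiff_const.add ((hcast.comp contDiff_fst).pow 2)).inv hdenne
    have := (hnum.mul hden).cexp
    simpa [div_eq_mul_inv] using this
  exact (hE1.mul hE2).mul hG

/-! ### Main theorem -/

set_option maxHeartbeats 4000000 in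
/-- Transfer of the shifted Casimir `Ω' = 2Ω - r(r+2)` to the compact picture:
with `θ = arctan t`, `y = x(1+t²)^{-1/2}`,
`2Ωf - r(r+2) f = (1+t²)^{r/2} e^{stx²/(1+t²)}
  (4sy² ∂_θF + 4s²y⁴ F + y² ∂_y²F - (1+2r) y ∂_yF)`. -/
theorem casimir_compact_picture (r s : ℂ)
    (F : ℝ → ℝ → ℂ) (hF : ContDiff ℝ (⊤ : ℕ∞) (fun p : ℝ × ℝ => F p.1 p.2)) :
    ∀ t x : ℝ,
      2 * OmegaNC r s (fofF r s F) t x - r * (r + 2) * fofF r s F t x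
        = prefac r s t x
          * (4 * s * ((x / Real.sqrt (1 + t ^ 2) : ℝ) : ℂ) ^ 2
                * pderivT F (Real.arctan t) (x / Real.sqrt (1 + t ^ 2))
             + 4 * s ^ 2 * ((x / Real.sqrt (1 + t ^ 2) : ℝ) : ℂ) ^ 4
                * F (Real.arctan t) (x / Real.sqrt (1 + t ^ 2))
             + ((x / Real.sqrt (1 + t ^ 2) : ℝ) : ℂ) ^ 2
                * pderivXX F (Real.arctan t) (x / Real.sqrt (1 + t ^ 2))
             - (1 + 2 * r) * ((x / Real.sqrt (1 + t ^ 2) : ℝ) : ℂ)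
                * pderivX F (Real.arctan t) (x / Real.sqrt (1 + t ^ 2))) := by
  intro t x
  have hF' : ContDiff ℝ (⊤:ℕ∞) (fun p : ℝ × ℝ => F p.1 p.2) := hF.of_le (by simp)
  have hsm := smooth_fofF r s hF'
  rw [op_lemma r s hsm t x, PX r s hF' t x, PT r s hF' t x, PXX r s hF' t x]
  have hu : (0:ℝ) < 1 + t^2 := by positivity
  have hC2 : ((Real.sqrt (1 + t^2) : ℝ):ℂ)^2 = 1 + (t:ℂ)^2 := by
    rw [← Complex.ofReal_pow, Real.sq_sqrt (le_of_lt hu)]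
    push_cast; ring
  have hsne : ((Real.sqrt (1 + t^2) : ℝ):ℂ) ≠ 0 :=
    Complex.ofReal_ne_zero.mpr (ne_of_gt (Real.sqrt_pos.mpr hu))
  push_cast
  generalize hC : ((Real.sqrt (1 + t^2) : ℝ) : ℂ) = C at hC2 hsne ⊢
  rw [← hC2]
  set G := F (Real.arctan t) (x / Real.sqrt (1 + t ^ 2)) with hG
  set FT := pderivT F (Real.arctan t) (x / Real.sqrt (1 + t ^ 2)) with hFT
  set FX := pderivX F (Real.arctan t) (x / Real.sqrt (1 + t ^ 2)) with hFX
  set FXX := pderivXX F (Real.arctan t) (x / Real.sqrt (1 + t ^ 2)) with hFXX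
  have key : (x:ℂ)^2 * ((2 * s * (t:ℂ) * (x:ℂ) / C^2)^2 * G
          + 2 * s * (t:ℂ) / C^2 * G
          + 2 * (2 * s * (t:ℂ) * (x:ℂ) / C^2) * (1 / C) * FX
          + (1 / C)^2 * FXX)
      - (1 + 2*r) * (x:ℂ) * (2 * s * (t:ℂ) * (x:ℂ) / C^2 * G + (1 / C) * FX)
      + 4 * s * (x:ℂ)^2 * ((r * (t:ℂ) / C^2 + s * (x:ℂ)^2 * (1 - (t:ℂ)^2) / (C^2)^2) * G
          + (1 / C^2) * FT
          - ((x:ℂ) * (t:ℂ) / (C^2 * C)) * FX)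
      = 4 * s * ((x:ℂ) / C) ^ 2 * FT
        + 4 * s ^ 2 * ((x:ℂ) / C) ^ 4 * G
        + ((x:ℂ) / C) ^ 2 * FXX
        - (1 + 2 * r) * ((x:ℂ) / C) * FX := by
    field_simp
    ring
  linear_combination prefac r s t x * key
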